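/- arXiv:math/9911258 — 5 statements merged into one kernel-verified Lean document; each statement's English description precedes it below -/
import Mathlib

section
/- For k ≤ g, the space of Sp(2g,ℚ)-invariant linear functionals on the 2k-fold tensor power of the standard symplectic representation H_ℚ = ℚ^{2g} has dimension at least (2k-1)!!; more precisely, the functionals α_C indexed by linear chord diagrams C on 2k vertices are linearly independent. -/
/-- The standard symplectic vector space `H_ℚ = ℚ^{2g}`. -/
abbrev SympVec (g : ℕ) : Type := (Fin g ⊕ Fin g) → ℚ

/-- The standard symplectic form `μ` on `ℚ^{2g}`, given by the matrix `J`. -/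
noncomputable def sympForm (g : ℕ) (u v : SympVec g) : ℚ :=
  dotProduct u (Matrix.mulVec (Matrix.J (Fin g) ℚ) v)

/-- Position `2s` among the `2k` vertices. -/
def posA {k : ℕ} (s : Fin k) : Fin (2 * k) := ⟨2 * s.1, by have := s.isLt; omega⟩

/-- Position `2s+1` among the `2k` vertices. -/
def posB {k : ℕ} (s : Fin k) : Fin (2 * k) := ⟨2 * s.1 + 1, by have := s.isLt; omega⟩

/-- A linear chord diagram on `{1,...,2k}`: a partition into `k` pairs `(i_s, j_s)` with
`i_s < j_s`, recorded canonically (chords listed with increasing first entries) via the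
permutation sending `(1,2,...,2k)` to `(i_1,j_1,...,i_k,j_k)`. -/
abbrev LinearChordDiagram (k : ℕ) : Type :=
  {π : Equiv.Perm (Fin (2 * k)) //
    (∀ s : Fin k, π (posA s) < π (posB s)) ∧
      ∀ s t : Fin k, s < t → π (posA s) < π (posA t)}

/-- The functional `α_C` on pure tensors:
`α_C(u_1 ⊗ ⋯ ⊗ u_{2k}) = sgn C · ∏_s μ(u_{i_s}, u_{j_s})`. -/
noncomputable def alphaFun (g k : ℕ) (C : LinearChordDiagram k)
    (u : Fin (2 * k) → SympVec g) : ℚ :=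
  ((Equiv.Perm.sign C.1 : ℤ) : ℚ) *
    ∏ s : Fin k, sympForm g (u (C.1 (posA s))) (u (C.1 (posB s)))

/-- The space of `Sp(2g,ℚ)`-invariant functionals on pure `2k`-fold tensors of `ℚ^{2g}`. -/
noncomputable def InvariantFunctionals (g k : ℕ) :
    Submodule ℚ ((Fin (2 * k) → SympVec g) → ℚ) where
  carrier := {α | ∀ A ∈ Matrix.symplecticGroup (Fin g) ℚ,
    ∀ u : Fin (2 * k) → SympVec g, α (fun i => Matrix.vecMul (u i) A) = α u}
  add_mem' := by
    intro a b ha hb A hA u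
    simp only [Pi.add_apply, ha A hA u, hb A hA u]
  zero_mem' := by intro A hA u; rfl
  smul_mem' := by
    intro c a ha A hA u
    simp only [Pi.smul_apply, ha A hA u]

/-! Evaluate on the tuple `e_C` carrying `x_s` and `y_s` at the two ends of the `s`-th chord of
`C` (this needs `k ≤ g` distinct symplectic pairs). Then `α_C(e_C) = ± 1`, while `α_{C'}(e_C) ≠ 0`
forces every chord of `C'` to be a chord of `C`, hence `C' = C`: the evaluation matrix is
diagonal. The count `(2k-1)!!` comes from joining the first vertex to any of the other `2k + 1`
vertices and placing a diagram on `2k` vertices on the rest, an injective construction. -/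

open Equiv Matrix
open scoped Nat

lemma linearIndependent_of_diagonal_eval {ι X K : Type*} [Ring K] [NoZeroDivisors K]
    (f : ι → X → K) (x : ι → X) (hdiag : ∀ i, f i (x i) ≠ 0)
    (hoff : ∀ i j, f j (x i) ≠ 0 → j = i) : LinearIndependent K f := by
  classical
  rw [linearIndependent_iff']
  intro s c hc i hi
  have hx := congrFun hc (x i)
  simp only [Finset.sum_apply, Pi.smul_apply, smul_eq_mul, Pi.zero_apply] at hx
  rw [Finset.sum_eq_single_of_mem i hi fun j _ hji => by
    rw [not_ne_iff.mp (mt (hoff i j) hji), mul_zero]] at hx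
  exact (mul_eq_zero.mp hx).resolve_right (hdiag i)

namespace Fin

def consPerm {n : ℕ} (j : Fin (n + 1)) (σ : Perm (Fin n)) : Perm (Fin (n + 2)) :=
  Perm.decomposeFin.symm (0, j.cycleRange.symm * Perm.decomposeFin.symm (0, σ))

variable {n : ℕ} (j : Fin (n + 1)) (σ : Perm (Fin n))

@[simp] lemma consPerm_zero : consPerm j σ 0 = 0 := by simp [consPerm]

@[simp] lemma consPerm_one : consPerm j σ 1 = j.succ := by simp [consPerm]

@[simp] lemma consPerm_succ_succ (i : Fin n) :
    consPerm j σ i.succ.succ = (j.succAbove (σ i)).succ := by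
  simp [consPerm]

end Fin

lemma sympForm_vecMul {g : ℕ} {A : Matrix (Fin g ⊕ Fin g) (Fin g ⊕ Fin g) ℚ}
    (hA : A ∈ symplecticGroup (Fin g) ℚ) (u v : SympVec g) :
    sympForm g (u ᵥ* A) (v ᵥ* A) = sympForm g u v := by
  rw [SymplecticGroup.mem_iff] at hA
  rw [sympForm, sympForm, ← mulVec_transpose A v, mulVec_mulVec, dotProduct_mulVec, vecMul_vecMul,
    ← Matrix.mul_assoc, hA, ← dotProduct_mulVec]

lemma alphaFun_mem_invariantFunctionals (g k : ℕ) (C : LinearChordDiagram k) :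
    alphaFun g k C ∈ InvariantFunctionals g k := fun A hA u => by
  simp only [alphaFun, sympForm_vecMul hA]

lemma sympForm_single_single (g : ℕ) (a b : Fin g ⊕ Fin g) :
    sympForm g (Pi.single a 1) (Pi.single b 1) = J (Fin g) ℚ a b := by
  simp [sympForm, mulVec_single, single_dotProduct]

lemma exists_eq_posA_or_eq_posB {k : ℕ} (p : Fin (2 * k)) :
    ∃ s : Fin k, p = posA s ∨ p = posB s := by
  refine ⟨⟨p / 2, by omega⟩, ?_⟩
  rcases Nat.even_or_odd' p.1 with ⟨m, hm | hm⟩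
  · left; ext; simp [posA]; omega
  · right; ext; simp [posB]; omega

@[simp] lemma posA_zero {k : ℕ} : posA (0 : Fin (k + 1)) = 0 := rfl

@[simp] lemma posB_zero {k : ℕ} : posB (0 : Fin (k + 1)) = 1 := by
  ext; simp [posB]

@[simp] lemma posA_succ {k : ℕ} (s : Fin k) : posA s.succ = (posA s).succ.succ := by
  ext; simp [posA]; ring

@[simp] lemma posB_succ {k : ℕ} (s : Fin k) : posB s.succ = (posB s).succ.succ := by
  ext; simp [posB]; ring

namespace LinearChordDiagram

lemma strictMono_posA {k : ℕ} (C : LinearChordDiagram k) : StrictMono fun s => C.1 (posA s) :=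
  fun s t => C.2.2 s t

/-- The normalisation of `C` and `C'` forces the reindexing `t` of the chords to be monotone,
hence the identity. -/
lemma eq_of_chords {k : ℕ} {C C' : LinearChordDiagram k} (t : Fin k → Fin k)
    (hA : ∀ s, C'.1 (posA s) = C.1 (posA (t s))) (hB : ∀ s, C'.1 (posB s) = C.1 (posB (t s))) :
    C' = C := by
  have ht : StrictMono t := fun a b hab => by
    simpa [(strictMono_posA C).lt_iff_lt, hA] using strictMono_posA C' hab
  obtain rfl : t = id := ht.eq_id
  refine Subtype.ext (Equiv.ext fun p => ?_)
  obtain ⟨s, rfl | rfl⟩ := exists_eq_posA_or_eq_posB p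
  exacts [hA s, hB s]

/-- The chord `(0, j + 1)` followed by `D` on the remaining vertices. -/
def cons {k : ℕ} (j : Fin (2 * k + 1)) (D : LinearChordDiagram k) :
    LinearChordDiagram (k + 1) := by
  refine ⟨Fin.consPerm j D.1, fun s => ?_, fun s t hst => ?_⟩
  · cases s using Fin.cases with
    | zero => simp [Fin.succ_pos]
    | succ s => simpa using D.2.1 s
  · cases t using Fin.cases with
    | zero => simp at hst
    | succ t =>
      cases s using Fin.cases with
      | zero => simp [Fin.succ_pos]
      | succ s => simpa using D.2.2 s t (by simpa using hst)

lemma cons_injective (k : ℕ) :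
    Function.Injective (fun p : Fin (2 * k + 1) × LinearChordDiagram k => cons p.1 p.2) := by
  rintro ⟨j, D⟩ ⟨j', D'⟩ h
  have h' : Fin.consPerm j D.1 = Fin.consPerm j' D'.1 := congrArg Subtype.val h
  obtain rfl : j = j' := Fin.succ_injective _ (by simpa using congrArg (· 1) h')
  refine Prod.ext rfl (Subtype.ext (Equiv.ext fun i => ?_))
  simpa using congrArg (· i.succ.succ) h'

lemma doubleFactorial_le_card (k : ℕ) :
    (2 * k - 1)‼ ≤ Fintype.card (LinearChordDiagram k) := by
  induction k with
  | zero => exact Fintype.card_pos_iff.mpr ⟨⟨1, by simp, by simp⟩⟩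
  | succ k ih =>
    calc (2 * (k + 1) - 1)‼ = (2 * k + 1) * (2 * k - 1)‼ := by
          rw [show 2 * (k + 1) - 1 = 2 * k + 1 by omega, Nat.doubleFactorial_add_one]
      _ ≤ Fintype.card (Fin (2 * k + 1) × LinearChordDiagram k) := by
          rw [Fintype.card_prod, Fintype.card_fin]; gcongr
      _ ≤ Fintype.card (LinearChordDiagram (k + 1)) :=
          Fintype.card_le_of_injective _ (cons_injective k)

end LinearChordDiagram

section ChordTuple

variable {g k : ℕ} (hk : k ≤ g)

def slotLabel (p : Fin (2 * k)) : Fin g ⊕ Fin g :=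
  if p.1 % 2 = 0 then .inl ⟨p / 2, by omega⟩ else .inr ⟨p / 2, by omega⟩

@[simp] lemma slotLabel_posA (s : Fin k) : slotLabel hk (posA s) = .inl (s.castLE hk) := by
  simp [slotLabel, posA, Fin.ext_iff]

@[simp] lemma slotLabel_posB (s : Fin k) : slotLabel hk (posB s) = .inr (s.castLE hk) := by
  simp [slotLabel, posB, Nat.add_mod, Fin.ext_iff]; omega

/-- `x_s` in the slot `i_s` and `y_s` in the slot `j_s` of each chord `(i_s, j_s)` of `C`. -/
noncomputable def chordTuple (C : LinearChordDiagram k) : Fin (2 * k) → SympVec g :=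
  fun p => Pi.single (slotLabel hk (C.1.symm p)) 1

lemma exists_chord_of_sympForm_chordTuple_ne_zero (C : LinearChordDiagram k) {p q : Fin (2 * k)}
    (h : sympForm g (chordTuple hk C p) (chordTuple hk C q) ≠ 0) :
    ∃ t, (p = C.1 (posA t) ∧ q = C.1 (posB t)) ∨ (p = C.1 (posB t) ∧ q = C.1 (posA t)) := by
  obtain ⟨s, hp | hp⟩ := exists_eq_posA_or_eq_posB (C.1.symm p) <;>
  obtain ⟨t, hq | hq⟩ := exists_eq_posA_or_eq_posB (C.1.symm q) <;>
  rw [Equiv.symm_apply_eq] at hp hq <;> subst hp hq <;>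
  simp [chordTuple, sympForm_single_single, J, one_apply] at h
  · exact ⟨s, .inl ⟨rfl, h ▸ rfl⟩⟩
  · exact ⟨s, .inr ⟨rfl, h ▸ rfl⟩⟩

lemma alphaFun_chordTuple_self (C : LinearChordDiagram k) :
    alphaFun g k C (chordTuple hk C) ≠ 0 := by
  simp [alphaFun, chordTuple, sympForm_single_single, J]

lemma eq_of_alphaFun_chordTuple_ne_zero {C C' : LinearChordDiagram k}
    (h : alphaFun g k C' (chordTuple hk C) ≠ 0) : C' = C := by
  have hchord (s : Fin k) : ∃ t, C'.1 (posA s) = C.1 (posA t) ∧ C'.1 (posB s) = C.1 (posB t) := by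
    have hs := Finset.prod_ne_zero_iff.mp (right_ne_zero_of_mul h) s (Finset.mem_univ s)
    obtain ⟨t, hst | ⟨hA, hB⟩⟩ := exists_chord_of_sympForm_chordTuple_ne_zero hk C hs
    · exact ⟨t, hst⟩
    · exact absurd (C'.2.1 s) (by rw [hA, hB]; exact (C.2.1 t).asymm)
  choose t hA hB using hchord
  exact LinearChordDiagram.eq_of_chords t hA hB

end ChordTuple

/-- for `k ≤ g`, the `Sp(2g,ℚ)`-invariant functionals `α_C` indexed by the
linear chord diagrams on `2k` vertices are linearly independent; in particular the space of
invariant functionals has dimension at least `(2k-1)!!`. -/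
theorem alphaFun_linearIndependent (g k : ℕ) (hk : k ≤ g) :
    (∀ C : LinearChordDiagram k, alphaFun g k C ∈ InvariantFunctionals g k) ∧
    LinearIndependent ℚ (fun C : LinearChordDiagram k => alphaFun g k C) ∧
    (Nat.doubleFactorial (2 * k - 1) : Cardinal) ≤ Module.rank ℚ (InvariantFunctionals g k) := by
  have hmem := alphaFun_mem_invariantFunctionals g k
  have hli : LinearIndependent ℚ fun C : LinearChordDiagram k => alphaFun g k C :=
    linearIndependent_of_diagonal_eval _ (chordTuple hk) (alphaFun_chordTuple_self hk)
      fun _ _ => eq_of_alphaFun_chordTuple_ne_zero hk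
  refine ⟨hmem, hli, ?_⟩
  have hli' : LinearIndependent ℚ fun C : LinearChordDiagram k =>
      (⟨alphaFun g k C, hmem C⟩ : InvariantFunctionals g k) :=
    .of_comp (InvariantFunctionals g k).subtype hli
  calc ((2 * k - 1)‼ : Cardinal) ≤ Fintype.card (LinearChordDiagram k) := by
        exact_mod_cast LinearChordDiagram.doubleFactorial_le_card k
    _ = Cardinal.mk (LinearChordDiagram k) := (Cardinal.mk_fintype _).symm
    _ ≤ Module.rank ℚ (InvariantFunctionals g k) := hli'.cardinal_le_rank
end

section
/- If g ≤ k−1, then the sum of the invariant tensors a_C over all linear chord diagrams C on 2k vertices vanishes in H_ℚ^{⊗2k}, i.e., Σ_{C ∈ 𝒟^ℓ(2k)} a_C = 0. -/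
open scoped TensorProduct

noncomputable def chordVec (g k : ℕ) (π : Equiv.Perm (Fin (2 * k)))
    (t : Fin k → Fin g × Bool) (i : Fin (2 * k)) : SympVec g :=
  let j := π.symm i
  let s : Fin k := ⟨j.1 / 2, by have := j.isLt; omega⟩
  if j.1 % 2 = 0 then
    (if (t s).2 then Pi.single (Sum.inl (t s).1) 1 else Pi.single (Sum.inr (t s).1) 1)
  else
    (if (t s).2 then Pi.single (Sum.inr (t s).1) 1 else Pi.single (Sum.inl (t s).1) 1)

noncomputable def chordCoeff {g k : ℕ} (t : Fin k → Fin g × Bool) : ℚ :=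
  ∏ s : Fin k, (if (t s).2 then 1 else -1)

noncomputable def aTensor (g k : ℕ) (π : Equiv.Perm (Fin (2 * k))) :
    ⨂[ℚ] _ : Fin (2 * k), SympVec g :=
  ((Equiv.Perm.sign π : ℤ) : ℚ) •
    ∑ t : Fin k → Fin g × Bool, chordCoeff t • PiTensorProduct.tprod ℚ (chordVec g k π t)


noncomputable def pairForm (g : ℕ) : SympVec g →ₗ[ℚ] SympVec g →ₗ[ℚ] ℚ :=
  Matrix.toLinearMap₂' ℚ (Matrix.J (Fin g) ℚ)

noncomputable def contractPair (g : ℕ) : (⨂[ℚ] _ : Fin 2, SympVec g) →ₗ[ℚ] ℚ :=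
  (TensorProduct.lift (pairForm g)) ∘ₗ
    (TensorProduct.congr (PiTensorProduct.subsingletonEquiv (0 : Fin 1))
        (PiTensorProduct.subsingletonEquiv (0 : Fin 1))).toLinearMap ∘ₗ
    (PiTensorProduct.tmulEquiv (ι := Fin 1) (ι₂ := Fin 1) ℚ (SympVec g)).symm.toLinearMap ∘ₗ
    (PiTensorProduct.reindex ℚ (fun _ : Fin 2 => SympVec g)
      (finSumFinEquiv (m := 1) (n := 1)).symm).toLinearMap

noncomputable def contractStep (g k : ℕ) :
    (⨂[ℚ] _ : Fin (2 * (k + 1)), SympVec g) →ₗ[ℚ] ⨂[ℚ] _ : Fin (2 * k), SympVec g :=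
  (TensorProduct.lid ℚ _).toLinearMap ∘ₗ
    (TensorProduct.map (contractPair g) LinearMap.id) ∘ₗ
    (PiTensorProduct.tmulEquiv (ι := Fin 2) (ι₂ := Fin (2 * k)) ℚ (SympVec g)).symm.toLinearMap ∘ₗ
    (PiTensorProduct.reindex ℚ (fun _ : Fin (2 * (k + 1)) => SympVec g)
      ((finCongr (by ring : 2 * (k + 1) = 2 + 2 * k)).trans finSumFinEquiv.symm)).toLinearMap

/-- The full contraction of `H^{⊗2k}` pairing consecutive factors `(1,2),(3,4),...` by `μ`. -/
noncomputable def fullContraction (g : ℕ) : (k : ℕ) →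
    (⨂[ℚ] _ : Fin (2 * k), SympVec g) →ₗ[ℚ] ℚ
  | 0 =>
    haveI : IsEmpty (Fin (2 * 0)) := ⟨fun i => i.elim0⟩
    (PiTensorProduct.isEmptyEquiv (Fin (2 * 0))).toLinearMap
  | (k + 1) => (fullContraction g k) ∘ₗ contractStep g k

noncomputable def alphaHat (g k : ℕ) (π : Equiv.Perm (Fin (2 * k))) :
    (⨂[ℚ] _ : Fin (2 * k), SympVec g) →ₗ[ℚ] ℚ :=
  ((Equiv.Perm.sign π : ℤ) : ℚ) •
    ((fullContraction g k) ∘ₗ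
      (PiTensorProduct.reindex ℚ (fun _ : Fin (2 * k) => SympVec g) (π⁻¹ : Equiv.Perm (Fin (2 * k)))).toLinearMap)

open Equiv

namespace ChordAux

def pairEquiv (k : ℕ) : Fin (2 * k) ≃ Fin k × Bool where
  toFun j := (⟨j.1 / 2, by have := j.isLt; omega⟩, decide (j.1 % 2 = 1))
  invFun p := ⟨2 * p.1.1 + cond p.2 1 0, by have := p.1.isLt; cases p.2 <;> simp <;> omega⟩
  left_inv j := by
    apply Fin.ext
    rcases Nat.mod_two_eq_zero_or_one j.1 with hm | hm <;> simp [hm] <;> omega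
  right_inv p := by
    obtain ⟨s, ε⟩ := p
    cases ε <;> refine Prod.ext (Fin.ext ?_) ?_ <;> simp <;> omega

lemma posA_eq {k : ℕ} (s : Fin k) : posA s = (pairEquiv k).symm (s, false) := by
  apply Fin.ext; simp [posA, pairEquiv]

lemma posB_eq {k : ℕ} (s : Fin k) : posB s = (pairEquiv k).symm (s, true) := by
  apply Fin.ext; simp [posB, pairEquiv]

noncomputable def vBase (g k : ℕ) (t : Fin k → Fin g × Bool) (j : Fin (2 * k)) : SympVec g :=
  let s : Fin k := ⟨j.1 / 2, by have := j.isLt; omega⟩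
  if j.1 % 2 = 0 then
    (if (t s).2 then Pi.single (Sum.inl (t s).1) 1 else Pi.single (Sum.inr (t s).1) 1)
  else
    (if (t s).2 then Pi.single (Sum.inr (t s).1) 1 else Pi.single (Sum.inl (t s).1) 1)

lemma chordVec_eq (g k : ℕ) (π : Equiv.Perm (Fin (2 * k))) (t : Fin k → Fin g × Bool) :
    chordVec g k π t = vBase g k t ∘ π.symm := rfl

lemma vBase_apply (g k : ℕ) (t : Fin k → Fin g × Bool) (s : Fin k) (ε : Bool) :
    vBase g k t ((pairEquiv k).symm (s, ε)) =
      if xor (t s).2 ε then Pi.single (Sum.inl (t s).1) 1 else Pi.single (Sum.inr (t s).1) 1 := by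
  have hval : ((pairEquiv k).symm (s, ε)).1 = 2 * s.1 + cond ε 1 0 := rfl
  have hdiv : (2 * s.1 + cond ε 1 0) / 2 = s.1 := by cases ε <;> simp <;> omega
  have hmod : (2 * s.1 + cond ε 1 0) % 2 = cond ε 1 0 := by cases ε <;> simp <;> omega
  simp only [vBase, hval, hdiv, hmod, Fin.eta]
  cases ε <;> cases h2 : (t s).2 <;> simp [h2]


def flipPerm {k : ℕ} (b : Fin k → Bool) : Equiv.Perm (Fin k × Bool) :=
  Equiv.prodCongrRight (fun s => if b s then Equiv.swap false true else Equiv.refl Bool)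

def midPerm {k : ℕ} (e : Equiv.Perm (Fin k)) (b : Fin k → Bool) : Equiv.Perm (Fin k × Bool) :=
  (flipPerm b).trans (Equiv.prodCongr e (Equiv.refl Bool))

lemma midPerm_apply {k : ℕ} (e : Equiv.Perm (Fin k)) (b : Fin k → Bool) (s : Fin k) (ε : Bool) :
    midPerm e b (s, ε) = (e s, xor ε (b s)) := by
  cases hb : b s <;> cases ε <;>
    simp [midPerm, flipPerm, hb, Equiv.swap_apply_left, Equiv.swap_apply_right]

lemma midPerm_symm_apply {k : ℕ} (e : Equiv.Perm (Fin k)) (b : Fin k → Bool) (s : Fin k)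
    (ε : Bool) : (midPerm e b).symm (s, ε) = (e.symm s, xor ε (b (e.symm s))) := by
  rw [Equiv.symm_apply_eq, midPerm_apply]
  simp [Bool.xor_assoc]

def wPerm {k : ℕ} (e : Equiv.Perm (Fin k)) (b : Fin k → Bool) : Equiv.Perm (Fin (2 * k)) :=
  ((pairEquiv k).symm).permCongr (midPerm e b)

lemma wPerm_apply {k : ℕ} (e : Equiv.Perm (Fin k)) (b : Fin k → Bool) (s : Fin k) (ε : Bool) :
    wPerm e b ((pairEquiv k).symm (s, ε)) = (pairEquiv k).symm (e s, xor ε (b s)) := by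
  simp [wPerm, Equiv.permCongr_apply, midPerm_apply]

lemma wPerm_symm_apply {k : ℕ} (e : Equiv.Perm (Fin k)) (b : Fin k → Bool) (s : Fin k) (ε : Bool) :
    (wPerm e b).symm ((pairEquiv k).symm (s, ε)) =
      (pairEquiv k).symm (e.symm s, xor ε (b (e.symm s))) := by
  rw [Equiv.symm_apply_eq, wPerm_apply]
  simp [Bool.xor_assoc]

lemma sign_wPerm {k : ℕ} (e : Equiv.Perm (Fin k)) (b : Fin k → Bool) :
    Equiv.Perm.sign (wPerm e b) = ∏ s : Fin k, (if b s then (-1 : ℤˣ) else 1) := by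
  rw [wPerm, Equiv.Perm.sign_permCongr]
  have h1 : midPerm e b = (Equiv.prodCongr e (Equiv.refl Bool) : Equiv.Perm (Fin k × Bool)) *
      flipPerm b := rfl
  have h2 : (Equiv.prodCongr e (Equiv.refl Bool) : Equiv.Perm (Fin k × Bool)) =
      Equiv.prodCongrLeft (fun _ : Bool => e) := by
    ext x <;> rfl
  rw [h1, map_mul, h2, Equiv.Perm.sign_prodCongrLeft, flipPerm, Equiv.Perm.sign_prodCongrRight]
  have h3 : ∀ s : Fin k, Equiv.Perm.sign (if b s then Equiv.swap false true else Equiv.refl Bool)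
      = (if b s then (-1 : ℤˣ) else 1) := by
    intro s
    cases hb : b s <;> simp [hb, Equiv.Perm.sign_swap]
  simp only [h3]
  have h4 : ∏ _x : Bool, Equiv.Perm.sign e = (Equiv.Perm.sign e) ^ 2 := by
    simp [Finset.prod_const, sq]
  rw [h4, Int.units_sq, one_mul]


def twistEquiv (g k : ℕ) (e : Equiv.Perm (Fin k)) (b : Fin k → Bool) :
    (Fin k → Fin g × Bool) ≃ (Fin k → Fin g × Bool) where
  toFun t s := ((t (e.symm s)).1, xor (t (e.symm s)).2 (b (e.symm s)))
  invFun t u := ((t (e u)).1, xor (t (e u)).2 (b u))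
  left_inv t := by
    funext u
    simp [Bool.xor_assoc]
  right_inv t := by
    funext s
    simp [Bool.xor_assoc]

lemma vBase_comp_wPerm_symm (g k : ℕ) (e : Equiv.Perm (Fin k)) (b : Fin k → Bool)
    (t : Fin k → Fin g × Bool) :
    vBase g k t ∘ (wPerm e b).symm = vBase g k (twistEquiv g k e b t) := by
  funext j
  obtain ⟨p, rfl⟩ := (pairEquiv k).symm.surjective j
  obtain ⟨s, ε⟩ := p
  show vBase g k t ((wPerm e b).symm ((pairEquiv k).symm (s, ε))) = _
  rw [wPerm_symm_apply, vBase_apply, vBase_apply]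
  have : xor (t (e.symm s)).2 (xor ε (b (e.symm s)))
      = xor ((twistEquiv g k e b t) s).2 ε := by
    show _ = xor (xor (t (e.symm s)).2 (b (e.symm s))) ε
    cases (t (e.symm s)).2 <;> cases ε <;> cases b (e.symm s) <;> rfl
  rw [this]
  rfl

lemma chordCoeff_twist (g k : ℕ) (e : Equiv.Perm (Fin k)) (b : Fin k → Bool)
    (t : Fin k → Fin g × Bool) :
    chordCoeff (twistEquiv g k e b t)
      = (∏ s : Fin k, (if b s then (-1 : ℚ) else 1)) * chordCoeff t := by
  unfold chordCoeff
  rw [← Finset.prod_mul_distrib,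
    ← Equiv.prod_comp e (fun s => (if ((twistEquiv g k e b t) s).2 then (1:ℚ) else -1))]
  refine Finset.prod_congr rfl fun s _ => ?_
  simp only [twistEquiv, Equiv.coe_fn_mk, Equiv.symm_apply_apply]
  cases hb : b s <;> cases ht : (t s).2 <;> norm_num

lemma aTensor_mul_wPerm (g k : ℕ) (π : Equiv.Perm (Fin (2 * k))) (e : Equiv.Perm (Fin k))
    (b : Fin k → Bool) : aTensor g k (π * wPerm e b) = aTensor g k π := by
  set S : ℚ := ∏ s : Fin k, (if b s then (-1 : ℚ) else 1) with hS
  have hS2 : S * S = 1 := by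
    rw [hS, ← Finset.prod_mul_distrib]
    rw [Finset.prod_congr rfl (fun s _ => show ((if b s then (-1:ℚ) else 1) *
      (if b s then (-1:ℚ) else 1)) = 1 by cases b s <;> norm_num)]
    exact Finset.prod_const_one
  have hsign : ((Equiv.Perm.sign (wPerm e b) : ℤ) : ℚ) = S := by
    rw [sign_wPerm, hS]
    push_cast
    exact Finset.prod_congr rfl fun s _ => by cases b s <;> simp
  have hcv : ∀ t, chordVec g k (π * wPerm e b) t = chordVec g k π (twistEquiv g k e b t) := by
    intro t
    rw [chordVec_eq, chordVec_eq, ← vBase_comp_wPerm_symm g k e b t]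
    rfl
  have hc : ∀ t, chordCoeff t = S * chordCoeff (twistEquiv g k e b t) := by
    intro t
    rw [chordCoeff_twist, ← mul_assoc, hS2, one_mul]
  unfold aTensor
  simp_rw [hcv]
  have hsum : (∑ t : Fin k → Fin g × Bool,
        chordCoeff t • PiTensorProduct.tprod ℚ (chordVec g k π (twistEquiv g k e b t)))
      = S • ∑ t : Fin k → Fin g × Bool,
        chordCoeff t • PiTensorProduct.tprod ℚ (chordVec g k π t) := by
    rw [Finset.smul_sum,
      ← Equiv.sum_comp (twistEquiv g k e b)
        (fun t => S • (chordCoeff t • PiTensorProduct.tprod ℚ (chordVec g k π t)))]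
    refine Finset.sum_congr rfl fun t _ => ?_
    rw [smul_smul, ← hc t]
  rw [hsum, smul_smul]
  congr 1
  rw [map_mul]
  push_cast
  rw [mul_assoc, hsign, hS2, mul_one]

lemma sum_perm_aTensor (g k : ℕ) (h : g < k) :
    ∑ σ : Equiv.Perm (Fin (2 * k)), aTensor g k σ = 0 := by
  unfold aTensor
  simp_rw [Finset.smul_sum]
  rw [Finset.sum_comm]
  refine Finset.sum_eq_zero fun t _ => ?_
  simp_rw [smul_comm _ (chordCoeff t)]
  rw [← Finset.smul_sum]
  have hdep : ¬ LinearIndependent ℚ (vBase g k t) := by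
    intro hli
    have h1 := hli.fintype_card_le_finrank
    rw [Module.finrank_pi] at h1
    simp only [Fintype.card_fin, Fintype.card_sum] at h1
    omega
  have h0 : MultilinearMap.alternatization
      (PiTensorProduct.tprod ℚ (s := fun _ : Fin (2 * k) => SympVec g)) (vBase g k t) = 0 :=
    AlternatingMap.map_linearDependent _ _ hdep
  rw [MultilinearMap.alternatization_apply] at h0
  have heq : ∑ σ : Equiv.Perm (Fin (2 * k)),
        ((Equiv.Perm.sign σ : ℤ) : ℚ) • PiTensorProduct.tprod ℚ (chordVec g k σ t)
      = ∑ σ : Equiv.Perm (Fin (2 * k)), Equiv.Perm.sign σ •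
        (PiTensorProduct.tprod ℚ (s := fun _ : Fin (2 * k) => SympVec g)).domDomCongr σ
          (vBase g k t) := by
    refine Fintype.sum_equiv (Equiv.inv (Equiv.Perm (Fin (2 * k)))) _ _ fun σ => ?_
    rw [chordVec_eq]
    rw [Equiv.inv_apply, Equiv.Perm.sign_inv, Units.smul_def, ← Int.cast_smul_eq_zsmul ℚ]
    rfl
  rw [heq, h0, smul_zero]

def recB (k : ℕ) (σ : Equiv.Perm (Fin (2 * k))) (u : Fin k) : Bool :=
  decide (σ (posB u) < σ (posA u))

def recM (k : ℕ) (σ : Equiv.Perm (Fin (2 * k))) (u : Fin k) : Fin (2 * k) :=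
  σ ((pairEquiv k).symm (u, recB k σ u))

lemma recM_injective (k : ℕ) (σ : Equiv.Perm (Fin (2 * k))) :
    Function.Injective (recM k σ) := by
  intro u u' huu
  have h2 := σ.injective huu
  have h3 := (pairEquiv k).symm.injective h2
  exact congrArg Prod.fst h3

def recE (k : ℕ) (σ : Equiv.Perm (Fin (2 * k))) : Equiv.Perm (Fin k) :=
  (Tuple.sort (recM k σ))⁻¹

def recPi (k : ℕ) (σ : Equiv.Perm (Fin (2 * k))) : Equiv.Perm (Fin (2 * k)) :=
  σ * (wPerm (recE k σ) (recB k σ))⁻¹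

lemma recPi_apply (k : ℕ) (σ : Equiv.Perm (Fin (2 * k))) (s : Fin k) (ε : Bool) :
    recPi k σ ((pairEquiv k).symm (s, ε))
      = σ ((pairEquiv k).symm (Tuple.sort (recM k σ) s,
          xor ε (recB k σ (Tuple.sort (recM k σ) s)))) := by
  show σ ((wPerm (recE k σ) (recB k σ))⁻¹ ((pairEquiv k).symm (s, ε))) = _
  have : ((wPerm (recE k σ) (recB k σ))⁻¹ : Equiv.Perm (Fin (2*k)))
      = (wPerm (recE k σ) (recB k σ)).symm := rfl
  rw [this, wPerm_symm_apply]
  congr 2 <;> simp [recE]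

lemma recPi_memA (k : ℕ) (σ : Equiv.Perm (Fin (2 * k))) (s : Fin k) :
    recPi k σ (posA s) < recPi k σ (posB s) := by
  rw [posA_eq, posB_eq, recPi_apply, recPi_apply]
  set u := Tuple.sort (recM k σ) s
  have hne : σ ((pairEquiv k).symm (u, false)) ≠ σ ((pairEquiv k).symm (u, true)) := by
    intro hcon
    have := (pairEquiv k).symm.injective (σ.injective hcon)
    simp at this
  cases hb : recB k σ u
  · have : ¬ (σ (posB u) < σ (posA u)) := by
      simpa [recB] using hb
    rw [posA_eq, posB_eq] at this
    simpa [hb] using lt_of_le_of_ne (not_lt.mp this) (Ne.symm (by simpa using hne))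
  · have : σ (posB u) < σ (posA u) := by
      simpa [recB] using hb
    rw [posA_eq, posB_eq] at this
    simpa [hb] using this

lemma recPi_memB (k : ℕ) (σ : Equiv.Perm (Fin (2 * k))) (s t : Fin k) (hst : s < t) :
    recPi k σ (posA s) < recPi k σ (posA t) := by
  rw [posA_eq, posA_eq, recPi_apply, recPi_apply]
  have hmono : StrictMono (recM k σ ∘ Tuple.sort (recM k σ)) :=
    (Tuple.monotone_sort (recM k σ)).strictMono_of_injective
      ((recM_injective k σ).comp (Tuple.sort (recM k σ)).injective)
  have := hmono hst
  simpa [recM, Bool.xor_false] using this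

lemma phi_apply (k : ℕ) (π : Equiv.Perm (Fin (2 * k))) (e : Equiv.Perm (Fin k))
    (b : Fin k → Bool) (s : Fin k) (ε : Bool) :
    (π * wPerm e b) ((pairEquiv k).symm (s, ε))
      = π ((pairEquiv k).symm (e s, xor ε (b s))) := by
  show π (wPerm e b ((pairEquiv k).symm (s, ε))) = _
  rw [wPerm_apply]

lemma recB_phi (k : ℕ) (π : Equiv.Perm (Fin (2 * k)))
    (hπ : ∀ s : Fin k, π (posA s) < π (posB s)) (e : Equiv.Perm (Fin k)) (b : Fin k → Bool) :
    recB k (π * wPerm e b) = b := by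
  funext u
  have hA : (π * wPerm e b) (posA u) = π ((pairEquiv k).symm (e u, b u)) := by
    rw [posA_eq, phi_apply]
    simp
  have hB : (π * wPerm e b) (posB u) = π ((pairEquiv k).symm (e u, !(b u))) := by
    rw [posB_eq, phi_apply]
    cases b u <;> simp
  unfold recB
  rw [hA, hB]
  have := hπ (e u)
  rw [posA_eq, posB_eq] at this
  cases hb : b u
  · simp only [hb, Bool.not_false, decide_eq_false_iff_not, not_lt]
    exact le_of_lt this
  · simp only [hb, Bool.not_true, decide_eq_true_eq]
    exact this

lemma recM_phi (k : ℕ) (π : Equiv.Perm (Fin (2 * k)))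
    (hπ : ∀ s : Fin k, π (posA s) < π (posB s)) (e : Equiv.Perm (Fin k)) (b : Fin k → Bool)
    (u : Fin k) : recM k (π * wPerm e b) u = π (posA (e u)) := by
  unfold recM
  rw [recB_phi k π hπ e b, phi_apply, posA_eq]
  cases b u <;> simp

lemma recE_phi (k : ℕ) (π : Equiv.Perm (Fin (2 * k)))
    (hπ : ∀ s : Fin k, π (posA s) < π (posB s))
    (hπ2 : ∀ s t : Fin k, s < t → π (posA s) < π (posA t))
    (e : Equiv.Perm (Fin k)) (b : Fin k → Bool) :
    recE k (π * wPerm e b) = e := by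
  have hsort : (e⁻¹ : Equiv.Perm (Fin k)) = Tuple.sort (recM k (π * wPerm e b)) := by
    rw [Tuple.eq_sort_iff]
    constructor
    · intro i j hij
      have : ∀ i, recM k (π * wPerm e b) (e⁻¹ i) = π (posA i) := by
        intro i
        rw [recM_phi k π hπ e b]
        simp
      rw [Function.comp_apply, Function.comp_apply, this, this]
      rcases lt_or_eq_of_le hij with hlt | heq
      · exact le_of_lt (hπ2 _ _ hlt)
      · rw [heq]
    · intro i j hij habs
      exfalso
      have := recM_injective k (π * wPerm e b) habs
      have : i = j := by simpa using congrArg e this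
      omega
  rw [recE, ← hsort, inv_inv]

def phiMap (g k : ℕ) :
    LinearChordDiagram k × (Equiv.Perm (Fin k) × (Fin k → Bool)) → Equiv.Perm (Fin (2 * k)) :=
  fun x => x.1.1 * wPerm x.2.1 x.2.2

lemma phiMap_bijective (g k : ℕ) : Function.Bijective (phiMap g k) := by
  apply Function.bijective_iff_has_inverse.mpr
  refine ⟨fun σ => (⟨recPi k σ, fun s => recPi_memA k σ s,
      fun s t hst => recPi_memB k σ s t hst⟩, recE k σ, recB k σ), ?_, ?_⟩
  · rintro ⟨⟨π, hπ1, hπ2⟩, e, b⟩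
    have hb := recB_phi k π hπ1 e b
    have he := recE_phi k π hπ1 hπ2 e b
    have hp : recPi k (π * wPerm e b) = π := by
      unfold recPi
      rw [hb, he, mul_inv_cancel_right]
    exact Prod.ext (Subtype.ext hp) (Prod.ext he hb)
  · intro σ
    show recPi k σ * wPerm (recE k σ) (recB k σ) = σ
    unfold recPi
    rw [inv_mul_cancel_right]

end ChordAux

/-- if `g ≤ k - 1` (i.e. `g < k`), then the sum of the invariant tensors `a_C`
over all linear chord diagrams on `2k` vertices vanishes in `H_ℚ^{⊗2k}`. -/
theorem sum_aTensor_eq_zero (g k : ℕ) (h : g < k) :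
    ∑ C : LinearChordDiagram k, aTensor g k C.1 = 0 := by
  open ChordAux in
  have h1 : ∑ x : LinearChordDiagram k × (Equiv.Perm (Fin k) × (Fin k → Bool)),
      aTensor g k (ChordAux.phiMap g k x) = ∑ σ : Equiv.Perm (Fin (2 * k)), aTensor g k σ :=
    Fintype.sum_bijective (ChordAux.phiMap g k) (ChordAux.phiMap_bijective g k) _ _
      (fun x => rfl)
  rw [ChordAux.sum_perm_aTensor g k h] at h1
  have h2 : ∑ x : LinearChordDiagram k × (Equiv.Perm (Fin k) × (Fin k → Bool)),
      aTensor g k (ChordAux.phiMap g k x)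
      = ((Fintype.card (Equiv.Perm (Fin k) × (Fin k → Bool)) : ℚ)) •
        ∑ C : LinearChordDiagram k, aTensor g k C.1 := by
    rw [Fintype.sum_prod_type]
    rw [Finset.smul_sum]
    refine Finset.sum_congr rfl fun C _ => ?_
    have : ∀ y : Equiv.Perm (Fin k) × (Fin k → Bool),
        aTensor g k (ChordAux.phiMap g k (C, y)) = aTensor g k C.1 := by
      rintro ⟨e, b⟩
      exact ChordAux.aTensor_mul_wPerm g k C.1 e b
    rw [Finset.sum_congr rfl fun y _ => this y, Finset.sum_const, Finset.card_univ,
      ← Nat.cast_smul_eq_nsmul ℚ]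
  rw [h2] at h1
  have hcard : (Fintype.card (Equiv.Perm (Fin k) × (Fin k → Bool)) : ℚ) ≠ 0 := by
    exact_mod_cast Nat.cast_ne_zero.mpr Fintype.card_ne_zero
  exact (smul_eq_zero.mp h1).resolve_left hcard
end

section
/- Let p_k = (1−σ_k)(1−σ_{k−1})···(1−σ_2) in the rational group algebra of the symmetric group S_k, where σ_i = (1 2 ··· i) is the i-cycle. Then p_k² = k·p_k. -/
/-!
Send a permutation `g` of `{0, …, n}` to the word `x_{g⁻¹ 0} ⋯ x_{g⁻¹ n}` in the free algebra on
`x_0, …, x_n`; this embeds the group algebra linearly. Left multiplication by `p_{n+1}` becomes the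
Dynkin operator `D`, which sends a word `y₁ ⋯ y_r` to the left-normed bracket
`⁅⋯⁅y₁, y₂⁆, …, y_r⁆`. In particular `p_{n+1}` itself goes to the left-normed bracket of
`x_0, …, x_n`, a Lie element of degree `n + 1`, and the Dynkin–Specht–Wever lemma says that the
Dynkin operator multiplies Lie elements of degree `r` by `r`. This is proved by induction on Lie
elements, from `D(a b) = ⁅D a, b⁆ + ε(a) D b` for Lie `b`, where `ε` is the augmentation.
-/

/-- The Dynkin element `p_k = (1-σ_k)(1-σ_{k-1})⋯(1-σ_2)` in the rational group algebra of
the symmetric group on `{1,...,k}`, where `σ_i = (1 2 ⋯ i)` is the `i`-cycle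
(`Fin.cycleRange ⟨i-1,_⟩` is the cycle `(0 1 ⋯ i-1)` of length `i`). -/
noncomputable def dynkinElement (k : ℕ) : MonoidAlgebra ℚ (Equiv.Perm (Fin k)) :=
  ((List.finRange (k - 1)).map fun j =>
    (1 : MonoidAlgebra ℚ (Equiv.Perm (Fin k))) -
      MonoidAlgebra.of ℚ (Equiv.Perm (Fin k))
        (Fin.cycleRange ⟨k - 1 - j.1, by have := j.isLt; omega⟩)).prod

open MulOpposite

namespace FreeAlgebra

section Words

variable (R : Type*) {X : Type*} [CommSemiring R]

def wordProd (l : List X) : FreeAlgebra R X := (l.map (ι R)).prod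

@[simp] lemma wordProd_nil : wordProd R ([] : List X) = 1 := rfl

@[simp] lemma wordProd_cons (x : X) (l : List X) :
    wordProd R (x :: l) = ι R x * wordProd R l := List.prod_cons

@[simp] lemma wordProd_append (l₁ l₂ : List X) :
    wordProd R (l₁ ++ l₂) = wordProd R l₁ * wordProd R l₂ := by
  simp [wordProd]

lemma equivMonoidAlgebraFreeMonoid_wordProd (l : List X) :
    equivMonoidAlgebraFreeMonoid (wordProd R l) = MonoidAlgebra.single (FreeMonoid.ofList l) 1 := by
  induction l with
  | nil => simp [MonoidAlgebra.one_def]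
  | cons x l ih =>
    rw [wordProd_cons, map_mul, ih]
    simp [equivMonoidAlgebraFreeMonoid, MonoidAlgebra.single_mul_single]

lemma basisFreeMonoid_ofList (l : List X) :
    basisFreeMonoid R X (FreeMonoid.ofList l) = wordProd R l := by
  apply equivMonoidAlgebraFreeMonoid.injective
  simp [basisFreeMonoid, equivMonoidAlgebraFreeMonoid_wordProd]

variable {R}

theorem induction_wordProd {motive : FreeAlgebra R X → Prop}
    (word : ∀ l, motive (wordProd R l)) (add : ∀ a b, motive a → motive b → motive (a + b))
    (smul : ∀ (c : R) a, motive a → motive (c • a)) (a : FreeAlgebra R X) : motive a := by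
  have ha : a ∈ Submodule.span R (Set.range (basisFreeMonoid R X)) := by
    simp [Module.Basis.span_eq]
  induction ha using Submodule.span_induction with
  | mem _ hm =>
    obtain ⟨m, rfl⟩ := hm
    rw [← FreeMonoid.ofList_toList m, basisFreeMonoid_ofList]
    exact word _
  | zero => simpa using smul 0 _ (word [])
  | add a b _ _ ha hb => exact add a b ha hb
  | smul c a _ ha => exact smul c a ha

end Words

section Brackets

variable {R X : Type*} [CommRing R]

variable (R X) in
def adRight : FreeAlgebra R X →ₐ[R] (Module.End R (FreeAlgebra R X))ᵐᵒᵖ :=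
  lift R fun x => op (LinearMap.mulRight R (ι R x) - LinearMap.mulLeft R (ι R x))

lemma adRight_ι_apply (x : X) (v : FreeAlgebra R X) :
    (adRight R X (ι R x)).unop v = ⁅v, ι R x⁆ := by
  simp [adRight, Ring.lie_def]

lemma adRight_wordProd_cons_apply (y : X) (l : List X) (v : FreeAlgebra R X) :
    (adRight R X (wordProd R (y :: l))).unop v =
      (adRight R X (wordProd R l)).unop ⁅v, ι R y⁆ := by
  simp [adRight_ι_apply]

variable (R) in
def leftNormedBracket : List X → FreeAlgebra R X
  | [] => 0
  | x :: l => (adRight R X (wordProd R l)).unop (ι R x)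

variable (R X) in
noncomputable def dynkinOperator : FreeAlgebra R X →ₗ[R] FreeAlgebra R X :=
  (basisFreeMonoid R X).constr R fun m => leftNormedBracket R m.toList

@[simp] lemma dynkinOperator_wordProd (l : List X) :
    dynkinOperator R X (wordProd R l) = leftNormedBracket R l := by
  rw [← basisFreeMonoid_ofList, dynkinOperator, Module.Basis.constr_basis]
  rfl

lemma dynkinOperator_one : dynkinOperator R X 1 = 0 := dynkinOperator_wordProd []

lemma dynkinOperator_ι_mul (x : X) (b : FreeAlgebra R X) :
    dynkinOperator R X (ι R x * b) = (adRight R X b).unop (ι R x) := by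
  induction b using induction_wordProd with
  | word l => rw [← wordProd_cons, dynkinOperator_wordProd, leftNormedBracket]
  | add a b ha hb => simp [mul_add, ha, hb]
  | smul c a ha => simp [ha]

@[simp] lemma algebraMapInv_ι (x : X) : algebraMapInv (ι R x) = 0 := lift_ι_apply _ _

lemma dynkinOperator_mul (a b : FreeAlgebra R X) :
    dynkinOperator R X (a * b) =
      (adRight R X b).unop (dynkinOperator R X a) + algebraMapInv a • dynkinOperator R X b := by
  induction a using induction_wordProd with
  | word l =>
    cases l with
    | nil => simp [dynkinOperator_one]
    | cons x l => simp [mul_assoc, dynkinOperator_ι_mul]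
  | add a a' ha ha' => simp only [add_mul, map_add, ha, ha', add_smul]; abel
  | smul c a ha => simp [ha, smul_add, mul_smul]

inductive IsLieOfDegree : ℕ → FreeAlgebra R X → Prop
  | ι (x : X) : IsLieOfDegree 1 (ι R x)
  | lie {r s : ℕ} {u v : FreeAlgebra R X} :
      IsLieOfDegree r u → IsLieOfDegree s v → IsLieOfDegree (r + s) ⁅u, v⁆
  | add {r : ℕ} {u v : FreeAlgebra R X} :
      IsLieOfDegree r u → IsLieOfDegree r v → IsLieOfDegree r (u + v)
  | smul {r : ℕ} (c : R) {u : FreeAlgebra R X} : IsLieOfDegree r u → IsLieOfDegree r (c • u)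

namespace IsLieOfDegree

variable {r : ℕ} {u : FreeAlgebra R X}

lemma adRight_apply (hu : IsLieOfDegree r u) (v : FreeAlgebra R X) :
    (adRight R X u).unop v = ⁅v, u⁆ := by
  induction hu generalizing v with
  | ι x => exact adRight_ι_apply x v
  | lie _ _ ihu ihv =>
    simp only [Ring.lie_def, map_sub, map_mul, unop_sub, unop_mul, LinearMap.sub_apply,
      Module.End.mul_apply, ihu, ihv]
    noncomm_ring
  | add _ _ ihu ihv =>
    simp only [map_add, unop_add, LinearMap.add_apply, ihu, ihv, Ring.lie_def]
    noncomm_ring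
  | smul c _ ih =>
    simp only [map_smul, unop_smul, LinearMap.smul_apply, ih, Ring.lie_def, smul_sub,
      mul_smul_comm, smul_mul_assoc]

lemma algebraMapInv_eq_zero (hu : IsLieOfDegree r u) : algebraMapInv u = 0 := by
  induction hu with
  | ι x => exact algebraMapInv_ι x
  | lie _ _ ihu ihv => simp [Ring.lie_def, ihu, ihv]
  | add _ _ ihu ihv => simp [ihu, ihv]
  | smul c _ ih => simp [ih]

theorem dynkinOperator_eq (hu : IsLieOfDegree r u) : dynkinOperator R X u = (r : R) • u := by
  induction hu with
  | ι x => simpa [leftNormedBracket] using dynkinOperator_wordProd (R := R) [x]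
  | @lie r s u v hu hv ihu ihv =>
    rw [Ring.lie_def, map_sub, dynkinOperator_mul, dynkinOperator_mul, hu.adRight_apply,
      hv.adRight_apply, hu.algebraMapInv_eq_zero, hv.algebraMapInv_eq_zero, ihu, ihv]
    simp only [Ring.lie_def, zero_smul, add_zero, Nat.cast_add, smul_mul_assoc, mul_smul_comm]
    module
  | add _ _ ihu ihv => simp [ihu, ihv]
  | smul c _ ih => simp [ih, smul_comm c]

lemma adRight_wordProd_apply (hu : IsLieOfDegree r u) (l : List X) :
    IsLieOfDegree (r + l.length) ((adRight R X (wordProd R l)).unop u) := by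
  induction l generalizing r u with
  | nil => simpa using hu
  | cons y l ih =>
    rw [adRight_wordProd_cons_apply, List.length_cons, add_comm l.length 1, ← add_assoc]
    exact ih (hu.lie (ι y))

end IsLieOfDegree

lemma isLieOfDegree_leftNormedBracket {l : List X} (hl : l ≠ []) :
    IsLieOfDegree l.length (leftNormedBracket R l) := by
  obtain ⟨x, l, rfl⟩ := List.exists_cons_of_ne_nil hl
  rw [leftNormedBracket, List.length_cons, add_comm]
  exact (IsLieOfDegree.ι x).adRight_wordProd_apply l

end Brackets

end FreeAlgebra
lemma List.ofFn_removeNth {β : Type*} {n : ℕ} (F : Fin (n + 1) → β) (c : Fin (n + 1)) :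
    List.ofFn (c.removeNth F) = (List.ofFn F).eraseIdx c := by
  refine List.ext_getElem (by simp [List.length_eraseIdx, Fin.is_le]) fun j _ _ => ?_
  simp only [List.getElem_ofFn, Fin.removeNth_apply, List.getElem_eraseIdx]
  split_ifs with h
  · rw [Fin.succAbove_of_castSucc_lt _ _ (by simpa [Fin.lt_def] using h)]; rfl
  · rw [Fin.succAbove_of_le_castSucc _ _ (by simpa [Fin.le_def] using h)]; rfl

lemma List.ofFn_comp_cycleRange_symm {β : Type*} {n : ℕ} (F : Fin (n + 1) → β)
    (c : Fin (n + 1)) :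
    List.ofFn (F ∘ c.cycleRange.symm) = F c :: (List.ofFn F).eraseIdx c := by
  rw [← Fin.cons_removeNth_eq_comp_cycleRange_symm, List.ofFn_cons, List.ofFn_removeNth]

open FreeAlgebra MonoidAlgebra Equiv

namespace Equiv.Perm

variable {n : ℕ}

def word (g : Perm (Fin n)) : List (Fin n) := List.ofFn ⇑g⁻¹

lemma word_injective : Function.Injective (word (n := n)) := fun _ _ h =>
  inv_injective (DFunLike.coe_injective (List.ofFn_injective h))

@[simp] lemma length_word (g : Perm (Fin n)) : g.word.length = n := List.length_ofFn

lemma word_cycleRange_mul {g : Perm (Fin (n + 1))} {U D : List (Fin (n + 1))} {a : Fin (n + 1)}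
    (hw : g.word = U ++ a :: D) (c : Fin (n + 1)) (hc : U.length = c) :
    (c.cycleRange * g).word = a :: (U ++ D) := by
  have ha : g⁻¹ c = a := by
    have h := List.getElem_of_eq hw (i := c) (by simp [Fin.is_le])
    simp only [word, List.getElem_ofFn, Fin.eta] at h
    simp [h, ← hc]
  rw [word, mul_inv_rev, coe_mul, inv_def c.cycleRange, List.ofFn_comp_cycleRange_symm, ← word,
    hw, ha, ← hc, List.eraseIdx_append_of_length_le le_rfl]
  simp

end Equiv.Perm

section WordMap

variable (R : Type*) [CommRing R] {n : ℕ}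

noncomputable def wordMap : MonoidAlgebra R (Perm (Fin n)) →ₗ[R] FreeAlgebra R (Fin n) :=
  (MonoidAlgebra.basis (Perm (Fin n)) R).constr R
    fun g => (wordProd R g.word : FreeAlgebra R (Fin n))

@[simp] lemma wordMap_single_one (g : Perm (Fin n)) :
    wordMap R (single g 1) = wordProd R g.word := by
  rw [← MonoidAlgebra.basis_apply, wordMap, Module.Basis.constr_basis]

lemma wordMap_injective : Function.Injective (wordMap R (n := n)) := by
  refine Module.Basis.injective_constr_of_linearIndependent _ ?_
  simp_rw [← basisFreeMonoid_ofList]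
  exact (basisFreeMonoid R _).linearIndependent.comp _
    (FreeMonoid.ofList.injective.comp Perm.word_injective)

end WordMap

section DynkinElement

variable (R : Type*) [CommRing R] (n : ℕ)

noncomputable def dynkinFactor (j : ℕ) : MonoidAlgebra R (Perm (Fin (n + 1))) :=
  1 - of R _ (Fin.cycleRange ⟨n - j, by omega⟩)

noncomputable def dynkinPartialProd (m : ℕ) : MonoidAlgebra R (Perm (Fin (n + 1))) :=
  ((List.range m).map (dynkinFactor R n)).prod

lemma dynkinElement_succ : dynkinElement (n + 1) = dynkinPartialProd ℚ n n := by
  rw [dynkinPartialProd, ← List.map_coe_finRange_eq_range, List.map_map]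
  rfl

variable {R n}

lemma dynkinPartialProd_succ_mul_single (m : ℕ) (g : Perm (Fin (n + 1))) :
    dynkinPartialProd R n (m + 1) * single g 1 =
      dynkinPartialProd R n m * single g 1 -
        dynkinPartialProd R n m * single (Fin.cycleRange ⟨n - m, by omega⟩ * g) 1 := by
  rw [dynkinPartialProd, List.range_succ, List.map_append, List.prod_append, ← dynkinPartialProd,
    List.map_singleton, List.prod_singleton, dynkinFactor, mul_assoc, sub_mul, one_mul, of_apply,
    single_mul_single, one_mul, mul_sub]

-- The factor `1 - σ_{c+1}` moves the `c`-th letter `a` of a word `U ++ a :: D` to the front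
-- (`Perm.word_cycleRange_mul`), which turns the prefix `U * a` into `⁅U, a⁆`.
theorem wordMap_dynkinPartialProd_mul_single {m : ℕ} {g : Perm (Fin (n + 1))}
    {U D : List (Fin (n + 1))} (hw : g.word = U ++ D) (hU : U.length + m = n + 1) :
    wordMap R (dynkinPartialProd R n m * single g 1) =
      (adRight R _ (wordProd R D)).unop (wordProd R U) := by
  have hD : D.length = m := by
    have := congrArg List.length hw
    simp only [Perm.length_word, List.length_append] at this
    omega
  induction m generalizing g U D with
  | zero =>
    rw [List.length_eq_zero_iff] at hD
    subst hD
    simp [dynkinPartialProd, hw]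
  | succ m ih =>
    obtain ⟨a, D, rfl⟩ := List.exists_cons_of_length_eq_add_one hD
    rw [dynkinPartialProd_succ_mul_single, map_sub,
      ih (U := U ++ [a]) (D := D) (by simp [hw]) (by simp; omega) (by simpa using hD),
      ih (U := a :: U) (D := D) (Perm.word_cycleRange_mul hw _ (by simp; omega)) (by simp; omega)
        (by simpa using hD),
      adRight_wordProd_cons_apply, Ring.lie_def]
    simp

theorem wordMap_dynkinPartialProd_mul (f : MonoidAlgebra R (Perm (Fin (n + 1)))) :
    wordMap R (dynkinPartialProd R n n * f) = dynkinOperator R _ (wordMap R f) := by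
  suffices (wordMap R).comp (LinearMap.mulLeft R (dynkinPartialProd R n n)) =
      (dynkinOperator R _).comp (wordMap R) from LinearMap.congr_fun this f
  refine (MonoidAlgebra.basis _ R).ext fun g => ?_
  obtain ⟨x, D, hw⟩ := List.exists_cons_of_length_eq_add_one g.length_word
  simp only [LinearMap.comp_apply, LinearMap.mulLeft_apply, MonoidAlgebra.basis_apply,
    wordMap_single_one, hw, dynkinOperator_wordProd, leftNormedBracket]
  rw [wordMap_dynkinPartialProd_mul_single (U := [x]) (D := D) hw (by simp; omega)]
  simp

end DynkinElement

/-- `p_k² = k · p_k` (the Dynkin idempotent property). -/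
theorem dynkinElement_sq (k : ℕ) (hk : 1 ≤ k) :
    dynkinElement k * dynkinElement k =
      (k : MonoidAlgebra ℚ (Equiv.Perm (Fin k))) * dynkinElement k := by
  obtain ⟨n, rfl⟩ : ∃ n, k = n + 1 := ⟨k - 1, by omega⟩
  apply wordMap_injective ℚ
  rw [dynkinElement_succ]
  have hp : wordMap ℚ (dynkinPartialProd ℚ n n) =
      leftNormedBracket ℚ (1 : Perm (Fin (n + 1))).word := by
    have h := wordMap_dynkinPartialProd_mul (R := ℚ) (n := n) (single 1 1)
    rwa [wordMap_single_one, dynkinOperator_wordProd, ← MonoidAlgebra.one_def, mul_one] at h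
  have hlie : IsLieOfDegree (n + 1) (wordMap ℚ (dynkinPartialProd ℚ n n)) := by
    simpa [hp] using isLieOfDegree_leftNormedBracket (R := ℚ)
      (List.ne_nil_of_length_eq_add_one (Perm.length_word (1 : Perm (Fin (n + 1)))))
  rw [wordMap_dynkinPartialProd_mul, hlie.dynkinOperator_eq, ← nsmul_eq_mul, map_nsmul,
    Nat.cast_smul_eq_nsmul]
end

section
/- If two linear chord diagrams C and C' on 6k vertices give isomorphic trivalent graphs Γ_C ≅ Γ_{C'} (formed by merging the vertex triples {1,2,3},{4,5,6},...,{6k−2,6k−1,6k} into single trivalent vertices), then the projected invariant tensors agree: p_*(a_C) = p_*(a_{C'}) in Λ^{2k}(Λ³H_ℚ), and the restricted functionals agree: i^*(α_C) = i^*(α_{C'}). -/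
/-- The wedge `v₁ ∧ ⋯ ∧ v_n` as an element of the `n`-th exterior power `⋀[ℚ]^n M`. -/
noncomputable def wedgePow (M : Type*) [AddCommGroup M] [Module ℚ M] (n : ℕ)
    (v : Fin n → M) : ⋀[ℚ]^n M :=
  ⟨ExteriorAlgebra.ιMulti ℚ n v, ExteriorAlgebra.ιMulti_range ℚ n (Set.mem_range_self v)⟩

/-- The trivalent-graph vertex (in `Fin 2k`) carrying the chord-diagram position
`i ∈ Fin 6k`: the vertex triples are `{1,2,3},{4,5,6},…`. -/
def vtx {k : ℕ} (i : Fin (2 * (3 * k))) : Fin (2 * k) :=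
  ⟨i.1 / 3, by have := i.isLt; omega⟩

/-- First endpoint (as a trivalent-graph vertex) of chord `s` of `C`. -/
def endA {k : ℕ} (C : LinearChordDiagram (3 * k)) (s : Fin (3 * k)) : Fin (2 * k) :=
  vtx (C.1 (posA s))

/-- Second endpoint (as a trivalent-graph vertex) of chord `s` of `C`. -/
def endB {k : ℕ} (C : LinearChordDiagram (3 * k)) (s : Fin (3 * k)) : Fin (2 * k) :=
  vtx (C.1 (posB s))

/-- Isomorphism of the trivalent graphs `Γ_C ≅ Γ_{C'}` (with vertex set `Fin 2k`, one edge
for each chord): a pair of bijections of vertices and of edges preserving (unordered)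
endpoints. -/
def GraphIso {k : ℕ} (C C' : LinearChordDiagram (3 * k)) : Prop :=
  ∃ (e : Equiv.Perm (Fin (2 * k))) (f : Equiv.Perm (Fin (3 * k))),
    ∀ s : Fin (3 * k),
      (e (endA C s) = endA C' (f s) ∧ e (endB C s) = endB C' (f s)) ∨
      (e (endA C s) = endB C' (f s) ∧ e (endB C s) = endA C' (f s))

/-- The projected invariant tensor `p_*(a_C) ∈ Λ^{2k}(Λ³ H)`: each term of `a_C` is wedged
in consecutive triples, then the `2k` triples are wedged together. -/
noncomputable def paTensor (g k : ℕ) (C : LinearChordDiagram (3 * k)) :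
    ⋀[ℚ]^(2 * k) (⋀[ℚ]^3 (SympVec g) : Submodule ℚ (ExteriorAlgebra ℚ (SympVec g))) :=
  ((Equiv.Perm.sign C.1 : ℤ) : ℚ) •
    ∑ t : Fin (3 * k) → Fin g × Bool, chordCoeff t •
      wedgePow _ (2 * k) (fun sv : Fin (2 * k) =>
        wedgePow (SympVec g) 3 (fun r : Fin 3 =>
          chordVec g (3 * k) C.1 t
            ⟨3 * sv.1 + r.1, by have := sv.isLt; have := r.isLt; omega⟩))

/-- The restricted functional `i^*(α_C)` on `Λ^{2k}(Λ³H)`, evaluated on pure wedges of pure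
wedges via the full antisymmetrization `i : Λ^{2k}(Λ³H) → H^{⊗6k}`. -/
noncomputable def iStarAlpha (g k : ℕ) (C : LinearChordDiagram (3 * k))
    (u : Fin (2 * k) → Fin 3 → SympVec g) : ℚ :=
  ∑ σ : Equiv.Perm (Fin (2 * k)), ∑ τ : Fin (2 * k) → Equiv.Perm (Fin 3),
    (((Equiv.Perm.sign σ : ℤ) : ℚ) *
        ∏ s : Fin (2 * k), ((Equiv.Perm.sign (τ s) : ℤ) : ℚ)) *
      alphaFun g (3 * k) C (fun j : Fin (2 * (3 * k)) =>
        u (σ ⟨j.1 / 3, by have := j.isLt; omega⟩)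
          ((τ (σ ⟨j.1 / 3, by have := j.isLt; omega⟩)) ⟨j.1 % 3, by omega⟩))

/-!
A graph isomorphism `Γ_C ≅ Γ_{C'}`, together with a choice of which chords it reverses, yields a
permutation `Φ` of the `6k` positions that carries each chord of `C` onto a chord of `C'` and
each vertex triple onto a vertex triple.

Because `Φ` matches chords, `α_C ∘ Φ^* = sgn Φ · α_{C'}` and `Φ^* a_{C'} = sgn Φ · a_C`: the
signs of `C`, `C'` and of the reversed chords add up to `sgn Φ`. Because `Φ` matches triples,
it is a block permutation `(v, r) ↦ (e v, ρ_v r)` whose sign is `sgn(e)³ ∏ sgn ρ_v =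
sgn(e) ∏ sgn ρ_v`, and precomposing with `Φ` multiplies both the wedge of wedges `p` and the
antisymmetrization `i^*` by this same sign. The two occurrences of `sgn Φ` cancel.
-/

open Equiv Equiv.Perm Finset

theorem Int.cast_units_mul_self {R : Type*} [Ring R] (u : ℤˣ) :
    ((u : ℤ) : R) * ((u : ℤ) : R) = 1 := by
  rw [← Int.cast_mul, ← Units.val_mul, Int.units_mul_self, Units.val_one, Int.cast_one]

namespace Equiv.Perm

section FiberPerm

variable {α β : Type*}

def fiberPerm (Φ : Perm (α × β)) (e : Perm α) (h : ∀ p, (Φ p).1 = e p.1) (a : α) : Perm β where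
  toFun b := (Φ (a, b)).2
  invFun b := (Φ.symm (e a, b)).2
  left_inv b := by
    show (Φ.symm (e a, (Φ (a, b)).2)).2 = b
    rw [show (e a, (Φ (a, b)).2) = Φ (a, b) from Prod.ext (h (a, b)).symm rfl, symm_apply_apply]
  right_inv b := by
    have hfst : (Φ.symm (e a, b)).1 = a := e.injective (by rw [← h, apply_symm_apply])
    show (Φ (a, (Φ.symm (e a, b)).2)).2 = b
    rw [show (a, (Φ.symm (e a, b)).2) = Φ.symm (e a, b) from Prod.ext hfst.symm rfl,
      apply_symm_apply]

theorem prodShear_fiberPerm (Φ : Perm (α × β)) (e : Perm α) (h : ∀ p, (Φ p).1 = e p.1) :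
    prodShear e (fiberPerm Φ e h) = Φ := by
  ext p : 1
  exact Prod.ext (h p).symm rfl

end FiberPerm

theorem sign_prodShear {α β : Type*} [DecidableEq α] [Fintype α] [DecidableEq β] [Fintype β]
    (e : Perm α) (ρ : α → Perm β) :
    sign (prodShear e ρ) = sign e ^ Fintype.card β * ∏ a, sign (ρ a) := by
  have : prodShear e ρ = prodCongrLeft (fun _ : β => e) * prodCongrRight ρ := by
    ext ⟨a, b⟩ <;> rfl
  rw [this, map_mul, sign_prodCongrLeft, sign_prodCongrRight, prod_const, card_univ]

end Equiv.Perm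

section Wedge

variable {M : Type*} [AddCommGroup M] [Module ℚ M]

theorem wedgePow_comp_perm (n : ℕ) (v : Fin n → M) (σ : Perm (Fin n)) :
    wedgePow M n (v ∘ σ) = ((sign σ : ℤ) : ℚ) • wedgePow M n v := by
  show exteriorPower.ιMulti ℚ n (v ∘ σ) = _
  rw [AlternatingMap.map_perm, Units.smul_def, ← Int.cast_smul_eq_zsmul ℚ]
  rfl

theorem wedgePow_smul (n : ℕ) (c : Fin n → ℚ) (v : Fin n → M) :
    wedgePow M n (fun i => c i • v i) = (∏ i, c i) • wedgePow M n v :=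
  (exteriorPower.ιMulti ℚ n).map_smul_univ c v

end Wedge

def chordEndEquiv (n : ℕ) : Fin n × Fin 2 ≃ Fin (2 * n) :=
  finProdFinEquiv.trans (finCongr (Nat.mul_comm n 2))

def vertexSlotEquiv (k : ℕ) : Fin (2 * k) × Fin 3 ≃ Fin (2 * (3 * k)) :=
  finProdFinEquiv.trans (finCongr (by ring))

@[simp]
theorem chordEndEquiv_zero {n : ℕ} (s : Fin n) : chordEndEquiv n (s, 0) = posA s := by
  ext; simp [chordEndEquiv, posA, mul_comm]

@[simp]
theorem chordEndEquiv_one {n : ℕ} (s : Fin n) : chordEndEquiv n (s, 1) = posB s := by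
  ext; simp [chordEndEquiv, posB]; ring

theorem vertexSlotEquiv_apply {k : ℕ} (p : Fin (2 * k) × Fin 3) :
    vertexSlotEquiv k p = ⟨3 * p.1 + p.2, by omega⟩ := by
  ext; simp [vertexSlotEquiv, add_comm]

@[simp]
theorem vertexSlotEquiv_symm_fst {k : ℕ} (j : Fin (2 * (3 * k))) :
    ((vertexSlotEquiv k).symm j).1 = vtx j := rfl

@[simp]
theorem vtx_vertexSlotEquiv {k : ℕ} (p : Fin (2 * k) × Fin 3) :
    vtx (vertexSlotEquiv k p) = p.1 :=
  congrArg Prod.fst ((vertexSlotEquiv k).symm_apply_apply p)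

noncomputable def blockWedge {M : Type*} [AddCommGroup M] [Module ℚ M] {k : ℕ}
    (x : Fin (2 * (3 * k)) → M) :
    ⋀[ℚ]^(2 * k) (⋀[ℚ]^3 M : Submodule ℚ (ExteriorAlgebra ℚ M)) :=
  wedgePow _ (2 * k) fun v => wedgePow M 3 fun r => x (vertexSlotEquiv k (v, r))

section Antisymm

variable {R V : Type*} [CommRing R] {k : ℕ}

def slotFamily (u : Fin (2 * k) → Fin 3 → V) (σ : Perm (Fin (2 * k)))
    (τ : Fin (2 * k) → Perm (Fin 3)) (j : Fin (2 * (3 * k))) : V :=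
  u (σ (vtx j)) (τ (σ (vtx j)) ((vertexSlotEquiv k).symm j).2)

def tripleAntisymm (F : (Fin (2 * (3 * k)) → V) → R) (u : Fin (2 * k) → Fin 3 → V) : R :=
  ∑ σ : Perm (Fin (2 * k)), ∑ τ : Fin (2 * k) → Perm (Fin 3),
    (((sign σ : ℤ) : R) * ∏ v, ((sign (τ v) : ℤ) : R)) * F (slotFamily u σ τ)

@[simp]
theorem slotFamily_vertexSlotEquiv (u : Fin (2 * k) → Fin 3 → V) (σ : Perm (Fin (2 * k)))
    (τ : Fin (2 * k) → Perm (Fin 3)) (v : Fin (2 * k)) (r : Fin 3) :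
    slotFamily u σ τ (vertexSlotEquiv k (v, r)) = u (σ v) (τ (σ v) r) := by
  simp [slotFamily]

end Antisymm

section TriplePreserving

variable {k : ℕ} {Φ : Perm (Fin (2 * (3 * k)))} {e : Perm (Fin (2 * k))}
  (he : ∀ i, vtx (Φ i) = e (vtx i))

include he in
theorem fst_permCongr_vertexSlotEquiv (p : Fin (2 * k) × Fin 3) :
    ((vertexSlotEquiv k).symm.permCongr Φ p).1 = e p.1 := by
  simpa using he (vertexSlotEquiv k p)

def slotPerm (v : Fin (2 * k)) : Perm (Fin 3) :=
  fiberPerm _ e (fst_permCongr_vertexSlotEquiv he) v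

theorem apply_vertexSlotEquiv (v : Fin (2 * k)) (r : Fin 3) :
    Φ (vertexSlotEquiv k (v, r)) = vertexSlotEquiv k (e v, slotPerm he v r) := by
  have := congrArg (fun Ψ : Perm _ => vertexSlotEquiv k (Ψ (v, r)))
    (prodShear_fiberPerm _ e (fst_permCongr_vertexSlotEquiv he))
  simpa [slotPerm] using this.symm

theorem sign_eq_mul_prod_sign_slotPerm : sign Φ = sign e * ∏ v, sign (slotPerm he v) := by
  rw [← sign_permCongr (vertexSlotEquiv k).symm,
    ← prodShear_fiberPerm _ e (fst_permCongr_vertexSlotEquiv he), sign_prodShear,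
    Fintype.card_fin, pow_succ, Int.units_sq, one_mul]
  rfl

include he in
theorem blockWedge_comp {M : Type*} [AddCommGroup M] [Module ℚ M]
    (x : Fin (2 * (3 * k)) → M) :
    blockWedge (x ∘ Φ) = ((sign Φ : ℤ) : ℚ) • blockWedge x := by
  set y : Fin (2 * k) → (⋀[ℚ]^3 M : Submodule ℚ (ExteriorAlgebra ℚ M)) :=
    fun v => wedgePow M 3 fun r => x (vertexSlotEquiv k (v, r))
  have hslots (v : Fin (2 * k)) :
      wedgePow M 3 (fun r => x (Φ (vertexSlotEquiv k (v, r))))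
        = ((sign (slotPerm he v) : ℤ) : ℚ) • y (e v) := by
    simp_rw [apply_vertexSlotEquiv he]
    exact wedgePow_comp_perm 3 (fun r => x (vertexSlotEquiv k (e v, r))) _
  calc blockWedge (x ∘ Φ)
      = wedgePow _ (2 * k) (fun v => ((sign (slotPerm he v) : ℤ) : ℚ) • y (e v)) :=
        congrArg _ (funext hslots)
    _ = (∏ v, ((sign (slotPerm he v) : ℤ) : ℚ)) • ((sign e : ℤ) : ℚ) • blockWedge x := by
        rw [wedgePow_smul]
        exact congrArg _ (wedgePow_comp_perm _ y e)
    _ = ((sign Φ : ℤ) : ℚ) • blockWedge x := by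
        rw [smul_smul, sign_eq_mul_prod_sign_slotPerm he]
        push_cast
        exact congrArg (· • blockWedge x) (mul_comm _ _)

theorem slotFamily_comp {V : Type*} (u : Fin (2 * k) → Fin 3 → V) (σ : Perm (Fin (2 * k)))
    (τ : Fin (2 * k) → Perm (Fin 3)) :
    slotFamily u σ τ ∘ Φ
      = slotFamily u (σ * e) (fun m => τ m * slotPerm he ((σ * e)⁻¹ m)) := by
  funext j
  obtain ⟨⟨v, r⟩, rfl⟩ := (vertexSlotEquiv k).surjective j
  simp [apply_vertexSlotEquiv he]

theorem sign_mul_prod_sign_slotPerm (σ : Perm (Fin (2 * k))) (τ : Fin (2 * k) → Perm (Fin 3)) :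
    sign (σ * e) * ∏ m, sign (τ m * slotPerm he ((σ * e)⁻¹ m))
      = sign σ * (∏ m, sign (τ m)) * sign Φ := by
  rw [sign_eq_mul_prod_sign_slotPerm he]
  simp only [map_mul, prod_mul_distrib]
  rw [Equiv.prod_comp (σ * e)⁻¹ fun v => sign (slotPerm he v)]
  ac_rfl

include he in
theorem tripleAntisymm_eq_of_comp {R V : Type*} [CommRing R]
    {F G : (Fin (2 * (3 * k)) → V) → R}
    (hFG : ∀ y, F (y ∘ Φ) = ((sign Φ : ℤ) : R) * G y) (u : Fin (2 * k) → Fin 3 → V) :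
    tripleAntisymm F u = tripleAntisymm G u := by
  unfold tripleAntisymm
  -- substituting `σ ↦ σ * e` and `τ m ↦ τ m * slotPerm he ((σ * e)⁻¹ m)` turns each family
  -- into its composite with `Φ`
  rw [← Equiv.sum_comp (Equiv.mulRight e)]
  refine sum_congr rfl fun σ _ => ?_
  rw [← Equiv.sum_comp (Equiv.piCongrRight fun m =>
    Equiv.mulRight (slotPerm he ((σ * e)⁻¹ m)))]
  refine sum_congr rfl fun τ _ => ?_
  have hτ : (piCongrRight fun m => Equiv.mulRight (slotPerm he ((σ * e)⁻¹ m))) τ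
      = fun m => τ m * slotPerm he ((σ * e)⁻¹ m) := rfl
  have hsign := congrArg (fun s : ℤˣ => ((s : ℤ) : R)) (sign_mul_prod_sign_slotPerm he σ τ)
  push_cast at hsign
  rw [coe_mulRight, hτ, hsign, ← slotFamily_comp he, hFG]
  linear_combination (((sign σ : ℤ) : R) * (∏ m, ((sign (τ m) : ℤ) : R)) *
    G (slotFamily u σ τ)) * Int.cast_units_mul_self (R := R) (sign Φ)

end TriplePreserving

def swapIf (b : Bool) : Perm (Fin 2) := bif b then swap 0 1 else 1

theorem sign_swapIf (b : Bool) : ((sign (swapIf b) : ℤ) : ℚ) = bif b then -1 else 1 := by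
  cases b <;> simp [swapIf, sign_swap (show (0 : Fin 2) ≠ 1 by decide)]

theorem sympForm_anticomm (g : ℕ) (u v : SympVec g) : sympForm g u v = -sympForm g v u := by
  unfold sympForm
  rw [Matrix.dotProduct_mulVec, ← Matrix.mulVec_transpose, Matrix.J_transpose,
    Matrix.neg_mulVec, dotProduct_comm, dotProduct_neg]

theorem sympForm_swapIf (g : ℕ) (b : Bool) (z : Fin 2 → SympVec g) :
    sympForm g (z (swapIf b 0)) (z (swapIf b 1))
      = ((sign (swapIf b) : ℤ) : ℚ) * sympForm g (z 0) (z 1) := by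
  rw [sign_swapIf]
  cases b
  · simp [swapIf]
  · simp [swapIf, sympForm_anticomm g (z 1)]

-- The basis vector that the term of `ω₀ = Σᵢ xᵢ ⊗ yᵢ - yᵢ ⊗ xᵢ` chosen by `p = (i, b)` places at
-- end `ε` of a chord: `b = true` picks `xᵢ ⊗ yᵢ`, `b = false` picks `yᵢ ⊗ xᵢ`.
noncomputable def chordEndVec (g : ℕ) (p : Fin g × Bool) (ε : Fin 2) : SympVec g :=
  if ε.1 = 0 then
    (if p.2 then Pi.single (Sum.inl p.1) 1 else Pi.single (Sum.inr p.1) 1)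
  else
    (if p.2 then Pi.single (Sum.inr p.1) 1 else Pi.single (Sum.inl p.1) 1)

theorem chordEndVec_swapIf (g : ℕ) (p : Fin g × Bool) (b : Bool) (ε : Fin 2) :
    chordEndVec g (p.1, xor p.2 b) (swapIf b ε) = chordEndVec g p ε := by
  obtain ⟨a, d⟩ := p
  cases b <;> cases d <;> fin_cases ε <;> simp [chordEndVec, swapIf]

theorem chordVec_apply (g n : ℕ) (π : Perm (Fin (2 * n))) (t : Fin n → Fin g × Bool)
    (i : Fin (2 * n)) :
    chordVec g n π t i = chordEndVec g (t ((chordEndEquiv n).symm (π.symm i)).1)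
      ((chordEndEquiv n).symm (π.symm i)).2 := rfl

@[simp]
theorem chordVec_apply_chordEndEquiv (g n : ℕ) (π : Perm (Fin (2 * n)))
    (t : Fin n → Fin g × Bool) (s : Fin n) (ε : Fin 2) :
    chordVec g n π t (π (chordEndEquiv n (s, ε))) = chordEndVec g (t s) ε := by
  rw [chordVec_apply, symm_apply_apply, symm_apply_apply]

def relabelChords {g n : ℕ} (f : Perm (Fin n)) (c : Fin n → Bool) :
    Perm (Fin n → Fin g × Bool) where
  toFun t s := ((t (f.symm s)).1, xor (t (f.symm s)).2 (c (f.symm s)))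
  invFun t s := ((t (f s)).1, xor (t (f s)).2 (c s))
  left_inv t := by funext s; simp
  right_inv t := by funext s; simp

@[simp]
theorem relabelChords_apply_apply {g n : ℕ} (f : Perm (Fin n)) (c : Fin n → Bool)
    (t : Fin n → Fin g × Bool) (s : Fin n) :
    relabelChords f c t (f s) = ((t s).1, xor (t s).2 (c s)) := by
  simp [relabelChords]

theorem chordCoeff_relabelChords {g n : ℕ} (f : Perm (Fin n)) (c : Fin n → Bool)
    (t : Fin n → Fin g × Bool) :
    chordCoeff (relabelChords f c t)
      = (∏ s, ((sign (swapIf (c s)) : ℤ) : ℚ)) * chordCoeff t := by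
  unfold chordCoeff
  rw [← Equiv.prod_comp f, ← prod_mul_distrib]
  refine prod_congr rfl fun s _ => ?_
  rw [relabelChords_apply_apply, sign_swapIf]
  cases c s <;> cases (t s).2 <;> simp

theorem paTensor_eq_sum_blockWedge (g k : ℕ) (C : LinearChordDiagram (3 * k)) :
    paTensor g k C = ((sign C.1 : ℤ) : ℚ) •
      ∑ t : Fin (3 * k) → Fin g × Bool, chordCoeff t • blockWedge (chordVec g (3 * k) C.1 t) := by
  simp only [paTensor, blockWedge, vertexSlotEquiv_apply]

theorem iStarAlpha_eq_tripleAntisymm (g k : ℕ) (C : LinearChordDiagram (3 * k)) :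
    iStarAlpha g k C = tripleAntisymm (alphaFun g (3 * k) C) := rfl

section ChordTransport

variable {k : ℕ} (C C' : LinearChordDiagram (3 * k)) (f : Perm (Fin (3 * k)))
  (c : Fin (3 * k) → Bool)

def chordTransport : Perm (Fin (2 * (3 * k))) :=
  C'.1 * (chordEndEquiv (3 * k)).permCongr (prodShear f fun s => swapIf (c s)) * C.1⁻¹

@[simp]
theorem chordTransport_apply (s : Fin (3 * k)) (ε : Fin 2) :
    chordTransport C C' f c (C.1 (chordEndEquiv _ (s, ε)))
      = C'.1 (chordEndEquiv _ (f s, swapIf (c s) ε)) := by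
  simp [chordTransport, permCongr_apply]

theorem sign_chordTransport :
    sign (chordTransport C C' f c) = sign C'.1 * (∏ s, sign (swapIf (c s))) * sign C.1 := by
  simp [chordTransport, sign_prodShear, Int.units_sq]

theorem sign_mul_sign_chordTransport :
    sign C'.1 * (∏ s, sign (swapIf (c s))) * sign (chordTransport C C' f c) = sign C.1 := by
  rw [sign_chordTransport]
  calc sign C'.1 * (∏ s, sign (swapIf (c s))) * (sign C'.1 * (∏ s, sign (swapIf (c s))) * sign C.1)
      = (sign C'.1 * sign C'.1) * ((∏ s, sign (swapIf (c s))) * ∏ s, sign (swapIf (c s)))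
          * sign C.1 := by ac_rfl
    _ = sign C.1 := by simp only [Int.units_mul_self, one_mul]

theorem alphaFun_comp_chordTransport (g : ℕ) (y : Fin (2 * (3 * k)) → SympVec g) :
    alphaFun g (3 * k) C (y ∘ chordTransport C C' f c)
      = ((sign (chordTransport C C' f c) : ℤ) : ℚ) * alphaFun g (3 * k) C' y := by
  have hchord (s : Fin (3 * k)) :
      sympForm g (y (chordTransport C C' f c (C.1 (posA s))))
          (y (chordTransport C C' f c (C.1 (posB s))))
        = ((sign (swapIf (c s)) : ℤ) : ℚ)
          * sympForm g (y (C'.1 (posA (f s)))) (y (C'.1 (posB (f s)))) := by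
    rw [← chordEndEquiv_zero, ← chordEndEquiv_one, chordTransport_apply, chordTransport_apply]
    simpa only [chordEndEquiv_zero, chordEndEquiv_one] using
      sympForm_swapIf g (c s) fun ε => y (C'.1 (chordEndEquiv _ (f s, ε)))
  simp only [alphaFun, Function.comp_apply, hchord, prod_mul_distrib, sign_chordTransport]
  rw [Equiv.prod_comp f fun s => sympForm g (y (C'.1 (posA s))) (y (C'.1 (posB s)))]
  push_cast
  linear_combination -((sign C.1 : ℤ) : ℚ) * (∏ s, ((sign (swapIf (c s)) : ℤ) : ℚ)) *
    (∏ s, sympForm g (y (C'.1 (posA s))) (y (C'.1 (posB s)))) *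
    Int.cast_units_mul_self (R := ℚ) (sign C'.1)

theorem chordVec_comp_chordTransport (g : ℕ) (t : Fin (3 * k) → Fin g × Bool) :
    chordVec g (3 * k) C'.1 (relabelChords f c t) ∘ chordTransport C C' f c
      = chordVec g (3 * k) C.1 t := by
  funext i
  obtain ⟨⟨s, ε⟩, rfl⟩ := ((chordEndEquiv _).trans C.1).surjective i
  simp only [Function.comp_apply, trans_apply, chordTransport_apply,
    chordVec_apply_chordEndEquiv, relabelChords_apply_apply, chordEndVec_swapIf]

end ChordTransport

theorem GraphIso.exists_chordTransport {k : ℕ} {C C' : LinearChordDiagram (3 * k)}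
    (h : GraphIso C C') :
    ∃ (e : Perm (Fin (2 * k))) (f : Perm (Fin (3 * k))) (c : Fin (3 * k) → Bool),
      ∀ i, vtx (chordTransport C C' f c i) = e (vtx i) := by
  obtain ⟨e, f, hef⟩ := h
  have hflip (s : Fin (3 * k)) : ∃ b : Bool, ∀ ε,
      vtx (C'.1 (chordEndEquiv _ (f s, swapIf b ε))) = e (vtx (C.1 (chordEndEquiv _ (s, ε)))) := by
    rcases hef s with ⟨hA, hB⟩ | ⟨hA, hB⟩
    · exact ⟨false, fun ε => by fin_cases ε <;> simp_all [swapIf, endA, endB]⟩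
    · exact ⟨true, fun ε => by fin_cases ε <;> simp_all [swapIf, endA, endB]⟩
  choose c hc using hflip
  refine ⟨e, f, c, fun i => ?_⟩
  obtain ⟨⟨s, ε⟩, rfl⟩ := ((chordEndEquiv _).trans C.1).surjective i
  simpa using hc s ε

section Invariance

variable {k : ℕ} {C C' : LinearChordDiagram (3 * k)} {f : Perm (Fin (3 * k))}
  {c : Fin (3 * k) → Bool} {e : Perm (Fin (2 * k))}
  (he : ∀ i, vtx (chordTransport C C' f c i) = e (vtx i))

include he in
theorem paTensor_eq_of_chordTransport (g : ℕ) : paTensor g k C = paTensor g k C' := by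
  have hW (t : Fin (3 * k) → Fin g × Bool) :
      blockWedge (chordVec g (3 * k) C'.1 (relabelChords f c t))
        = ((sign (chordTransport C C' f c) : ℤ) : ℚ) • blockWedge (chordVec g (3 * k) C.1 t) := by
    rw [← chordVec_comp_chordTransport C C' f c g t, blockWedge_comp he, smul_smul,
      Int.cast_units_mul_self, one_smul]
  have hsign := congrArg (fun s : ℤˣ => ((s : ℤ) : ℚ)) (sign_mul_sign_chordTransport C C' f c)
  push_cast at hsign
  rw [paTensor_eq_sum_blockWedge, paTensor_eq_sum_blockWedge,
    ← Equiv.sum_comp (relabelChords f c) fun t => chordCoeff t • blockWedge (chordVec g _ C'.1 t)]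
  simp only [chordCoeff_relabelChords, hW, smul_sum, smul_smul]
  refine sum_congr rfl fun t _ => congrArg (· • _) ?_
  rw [← hsign]
  ring

include he in
theorem iStarAlpha_eq_of_chordTransport (g : ℕ) (u : Fin (2 * k) → Fin 3 → SympVec g) :
    iStarAlpha g k C u = iStarAlpha g k C' u := by
  rw [iStarAlpha_eq_tripleAntisymm, iStarAlpha_eq_tripleAntisymm]
  exact tripleAntisymm_eq_of_comp he (alphaFun_comp_chordTransport C C' f c g) u

end Invariance

/-- if two linear chord diagrams on `6k` vertices have isomorphic trivalent
graphs, then the projected invariant tensors `p_*(a_C)` in `Λ^{2k}(Λ³H)` agree, and the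
restricted functionals `i^*(α_C)` agree. -/
theorem paTensor_eq_of_graphIso (g k : ℕ) (C C' : LinearChordDiagram (3 * k))
    (h : GraphIso C C') :
    paTensor g k C = paTensor g k C' ∧
    ∀ u : Fin (2 * k) → Fin 3 → SympVec g, iStarAlpha g k C u = iStarAlpha g k C' u := by
  obtain ⟨e, f, c, he⟩ := h.exists_chordTransport
  exact ⟨paTensor_eq_of_chordTransport he g, iStarAlpha_eq_of_chordTransport he g⟩
end

section
/- If Γ is a group such that every element of Γ is a product of at most N commutators for some fixed N (Γ is uniformly perfect), then any real-valued quasimorphism on Γ that is a homomorphism must be bounded; equivalently, every homomorphism Γ → ℝ is trivial and, more generally, the comparison map from second bounded cohomology H²_b(Γ;ℝ) to ordinary cohomology H²(Γ;ℝ) is injective. -/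
/-!
A function `d : Γ → ℝ` whose coboundary is bounded by `M` is a quasimorphism of defect `M`: it
is additive on products of `n` factors up to an error `(n + 1) M`, and, since `d a⁻¹` is within
`2 M` of `-d a`, bounded by `9 M` on commutators. On a group in which every element is a product
of at most `N` commutators, `d` is therefore bounded by `(10 N + 1) M`. A homomorphism has
defect `0`, so it vanishes; and if a bounded cocycle `τ` is the coboundary of `d`, then `d`
itself is a bounded primitive of `τ`.
-/

open scoped commutatorElement

def IsQuasimorphismWithDefect {G : Type*} [Group G] (M : ℝ) (d : G → ℝ) : Prop :=
  ∀ a b : G, |d a + d b - d (a * b)| ≤ M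

namespace IsQuasimorphismWithDefect

variable {G : Type*} [Group G] {M : ℝ} {d : G → ℝ}

theorem nonneg (hd : IsQuasimorphismWithDefect M d) : 0 ≤ M :=
  (abs_nonneg _).trans (hd 1 1)

theorem abs_apply_one_le (hd : IsQuasimorphismWithDefect M d) : |d 1| ≤ M := by
  simpa using hd 1 1

theorem abs_apply_list_prod_sub_sum_le (hd : IsQuasimorphismWithDefect M d) (l : List G) :
    |d l.prod - (l.map d).sum| ≤ (l.length + 1) * M := by
  induction l with
  | nil => simpa using hd.abs_apply_one_le
  | cons a t ih =>
    have hstep := abs_le.mp (hd a t.prod)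
    have ih' := abs_le.mp ih
    simp only [List.prod_cons, List.map_cons, List.sum_cons, List.length_cons, Nat.cast_succ]
    rw [abs_le]
    constructor <;> linarith

theorem abs_apply_add_apply_inv_le (hd : IsQuasimorphismWithDefect M d) (a : G) :
    |d a + d a⁻¹| ≤ 2 * M := by
  have h := abs_le.mp (hd a a⁻¹)
  have h1 := abs_le.mp hd.abs_apply_one_le
  rw [mul_inv_cancel] at h
  rw [abs_le]
  constructor <;> linarith

theorem abs_apply_commutatorElement_le (hd : IsQuasimorphismWithDefect M d) (a b : G) :
    |d ⁅a, b⁆| ≤ 9 * M := by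
  have hprod := abs_le.mp (hd.abs_apply_list_prod_sub_sum_le [a, b, a⁻¹, b⁻¹])
  have ha := abs_le.mp (hd.abs_apply_add_apply_inv_le a)
  have hb := abs_le.mp (hd.abs_apply_add_apply_inv_le b)
  simp only [List.prod_cons, List.prod_nil, List.map_cons, List.map_nil, List.sum_cons,
    List.sum_nil, List.length_cons, List.length_nil, mul_one, ← mul_assoc] at hprod
  rw [commutatorElement_def, abs_le]
  constructor <;> linarith

theorem abs_apply_prod_commutators_le (hd : IsQuasimorphismWithDefect M d)
    (l : List (G × G)) :
    |d (l.map fun p => ⁅p.1, p.2⁆).prod| ≤ (10 * l.length + 1) * M := by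
  induction l with
  | nil => simpa using hd.abs_apply_one_le
  | cons p t ih =>
    have hstep := abs_le.mp (hd ⁅p.1, p.2⁆ (t.map fun p => ⁅p.1, p.2⁆).prod)
    have hp := abs_le.mp (hd.abs_apply_commutatorElement_le p.1 p.2)
    have ih' := abs_le.mp ih
    simp only [List.map_cons, List.prod_cons, List.length_cons, Nat.cast_succ]
    rw [abs_le]
    constructor <;> linarith

theorem abs_le_of_forall_eq_prod_commutators (hd : IsQuasimorphismWithDefect M d) (N : ℕ)
    (hperf : ∀ γ : G, ∃ l : List (G × G), l.length ≤ N ∧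
      γ = (l.map fun p => ⁅p.1, p.2⁆).prod) (γ : G) :
    |d γ| ≤ (10 * N + 1) * M := by
  obtain ⟨l, hlen, rfl⟩ := hperf γ
  have hlen' : (l.length : ℝ) ≤ N := by exact_mod_cast hlen
  calc _ ≤ (10 * l.length + 1) * M := hd.abs_apply_prod_commutators_le l
    _ ≤ (10 * N + 1) * M := by gcongr; exact hd.nonneg

end IsQuasimorphismWithDefect

/-- if `Γ` is uniformly perfect (every element is a product of at most `N`
commutators), then every homomorphism `Γ → ℝ` is trivial and the comparison map
`H²_b(Γ;ℝ) → H²(Γ;ℝ)` is injective: any bounded 2-cocycle which is the coboundary of some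
(arbitrary) 1-cochain is also the coboundary of a *bounded* 1-cochain. -/
theorem uniformly_perfect_comparison_injective {Γ : Type*} [Group Γ] (N : ℕ)
    (hperf : ∀ γ : Γ, ∃ l : List (Γ × Γ), l.length ≤ N ∧
      γ = (l.map fun p => ⁅p.1, p.2⁆).prod) :
    (∀ φ : Γ → ℝ, (∀ a b : Γ, φ (a * b) = φ a + φ b) → ∀ γ : Γ, φ γ = 0) ∧
    (∀ τ : Γ → Γ → ℝ,
      (∀ a b c : Γ, τ a b + τ (a * b) c = τ b c + τ a (b * c)) →
      (∃ M : ℝ, ∀ a b : Γ, |τ a b| ≤ M) →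
      ∀ d : Γ → ℝ, (∀ a b : Γ, τ a b = d a + d b - d (a * b)) →
        ∃ b : Γ → ℝ, (∃ M : ℝ, ∀ γ : Γ, |b γ| ≤ M) ∧
          ∀ a c : Γ, τ a c = b a + b c - b (a * c)) := by
  constructor
  · intro φ hφ γ
    have hquasi : IsQuasimorphismWithDefect 0 φ := fun a b => by simp [hφ]
    simpa using hquasi.abs_le_of_forall_eq_prod_commutators N hperf γ
  · rintro τ - ⟨M, hM⟩ d hd
    have hquasi : IsQuasimorphismWithDefect M d := fun a b => hd a b ▸ hM a b
    exact ⟨d, ⟨_, hquasi.abs_le_of_forall_eq_prod_commutators N hperf⟩, hd⟩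
end
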